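/- arXiv:0808.3651 — 3 statements merged into one kernel-verified Lean document; each statement's English description precedes it below -/
import Mathlib

section
/- Weight-function lifting is transitive: if R1, R2 ⊆ S × S and μ1 ⊑_{R1} μ2 and μ2 ⊑_{R2} μ3 for stochastic distributions μ1, μ2, μ3 on a finite set S, then μ1 ⊑_{R1∘R2} μ3, where R1∘R2 is relational composition. -/
/-! Glue the two weight functions through `μ₂`: the mass `Δ₁ s t` arriving at `t` is sent on in
the proportions `Δ₂ t u / μ₂ t` in which `Δ₂` leaves `t`, giving
`Δ s u = ∑ t, Δ₁ s t * Δ₂ t u / μ₂ t`. Its rows sum as those of `Δ₁`, its columns as those of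
`Δ₂`, and `Δ s u > 0` needs a `t` with `Δ₁ s t > 0` and `Δ₂ t u > 0`. -/

open Finset

variable {S : Type*} [Fintype S]

/-- `μ ⊑_R μ'` for stochastic distributions: there is `Δ : S × S → [0,1]`
with `Δ(s,s') > 0 ⟹ (s,s') ∈ R`, rows summing to `μ` and columns to `μ'`. -/
def Lift (R : Set (S × S)) (μ μ' : S → ℝ) : Prop :=
  ∃ Δ : S → S → ℝ,
    (∀ s t, 0 ≤ Δ s t ∧ Δ s t ≤ 1) ∧
    (∀ s t, 0 < Δ s t → (s, t) ∈ R) ∧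
    (∀ s, μ s = ∑ t, Δ s t) ∧
    (∀ t, μ' t = ∑ s, Δ s t)

/-- Where `ν t = 0` the summand is `x / 0 = 0`; this is harmless because for a marginal `ν` of
nonnegative weights no mass then passes through `t`. -/
noncomputable def weightComp (Δ₁ Δ₂ : S → S → ℝ) (ν : S → ℝ) (s u : S) : ℝ :=
  ∑ t, Δ₁ s t * Δ₂ t u / ν t

lemma le_one_of_sum_sum_eq_one {f : S → S → ℝ} (hf : ∀ s u, 0 ≤ f s u)
    (h : ∑ s, ∑ u, f s u = 1) (s u : S) : f s u ≤ 1 :=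
  calc f s u ≤ ∑ u', f s u' := single_le_sum (fun u' _ => hf s u') (mem_univ u)
    _ ≤ ∑ s', ∑ u', f s' u' :=
        single_le_sum (fun s' _ => sum_nonneg fun u' _ => hf s' u') (mem_univ s)
    _ = 1 := h

section weightComp

variable {Δ₁ Δ₂ : S → S → ℝ} {ν : S → ℝ}

lemma weightComp_nonneg (h₁ : ∀ s t, 0 ≤ Δ₁ s t) (h₂ : ∀ t u, 0 ≤ Δ₂ t u) (hν : ∀ t, 0 ≤ ν t)
    (s u : S) : 0 ≤ weightComp Δ₁ Δ₂ ν s u :=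
  sum_nonneg fun t _ => div_nonneg (mul_nonneg (h₁ s t) (h₂ t u)) (hν t)

lemma exists_pos_of_weightComp_pos (h₁ : ∀ s t, 0 ≤ Δ₁ s t) (h₂ : ∀ t u, 0 ≤ Δ₂ t u) {s u : S}
    (h : 0 < weightComp Δ₁ Δ₂ ν s u) : ∃ t, 0 < Δ₁ s t ∧ 0 < Δ₂ t u := by
  unfold weightComp at h
  obtain ⟨t, -, ht⟩ := exists_lt_of_sum_lt (s := univ) (f := fun _ => (0 : ℝ))
    (by simpa only [sum_const_zero] using h)
  have h₁t : Δ₁ s t ≠ 0 := by rintro h0; simp [h0] at ht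
  have h₂t : Δ₂ t u ≠ 0 := by rintro h0; simp [h0] at ht
  exact ⟨t, (h₁ s t).lt_of_ne' h₁t, (h₂ t u).lt_of_ne' h₂t⟩

lemma sum_weightComp_right (hrow : ∀ t, ν t = ∑ u, Δ₂ t u)
    (hzero : ∀ s t, ν t = 0 → Δ₁ s t = 0) (s : S) :
    ∑ u, weightComp Δ₁ Δ₂ ν s u = ∑ t, Δ₁ s t := by
  simp only [weightComp]
  rw [sum_comm]
  refine sum_congr rfl fun t _ => ?_
  simp_rw [mul_div_assoc, ← mul_sum, ← sum_div, ← hrow]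
  by_cases hν : ν t = 0
  · simp [hzero s t hν]
  · rw [div_self hν, mul_one]

lemma sum_weightComp_left (hcol : ∀ t, ν t = ∑ s, Δ₁ s t)
    (hzero : ∀ t u, ν t = 0 → Δ₂ t u = 0) (u : S) :
    ∑ s, weightComp Δ₁ Δ₂ ν s u = ∑ t, Δ₂ t u := by
  simp only [weightComp]
  rw [sum_comm]
  refine sum_congr rfl fun t _ => ?_
  simp_rw [mul_comm (Δ₁ _ t), mul_div_assoc, ← mul_sum, ← sum_div, ← hcol]
  by_cases hν : ν t = 0
  · simp [hzero t u hν]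
  · rw [div_self hν, mul_one]

end weightComp

theorem lift_trans_general (μ₁ μ₂ μ₃ : S → ℝ)
    (h₁1 : ∑ s, μ₁ s = 1)
    (R₁ R₂ : Set (S × S))
    (h12 : Lift R₁ μ₁ μ₂) (h23 : Lift R₂ μ₂ μ₃) :
    Lift {p : S × S | ∃ t, (p.1, t) ∈ R₁ ∧ (t, p.2) ∈ R₂} μ₁ μ₃ := by
  obtain ⟨Δ₁, hb₁, hR₁, hrow₁, hcol₁⟩ := h12
  obtain ⟨Δ₂, hb₂, hR₂, hrow₂, hcol₂⟩ := h23
  have h₁ : ∀ s t, 0 ≤ Δ₁ s t := fun s t => (hb₁ s t).1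
  have h₂ : ∀ t u, 0 ≤ Δ₂ t u := fun t u => (hb₂ t u).1
  have hμ₂ : ∀ t, 0 ≤ μ₂ t := fun t => hcol₁ t ▸ sum_nonneg fun s _ => h₁ s t
  have hzero₁ : ∀ s t, μ₂ t = 0 → Δ₁ s t = 0 := fun s t h =>
    congrFun ((Fintype.sum_eq_zero_iff_of_nonneg fun s => h₁ s t).1 (hcol₁ t ▸ h)) s
  have hzero₂ : ∀ t u, μ₂ t = 0 → Δ₂ t u = 0 := fun t u h =>
    congrFun ((Fintype.sum_eq_zero_iff_of_nonneg (h₂ t)).1 (hrow₂ t ▸ h)) u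
  have hrow : ∀ s, μ₁ s = ∑ u, weightComp Δ₁ Δ₂ μ₂ s u := fun s => by
    rw [sum_weightComp_right hrow₂ hzero₁, hrow₁]
  have hcol : ∀ u, μ₃ u = ∑ s, weightComp Δ₁ Δ₂ μ₂ s u := fun u => by
    rw [sum_weightComp_left hcol₁ hzero₂, hcol₂]
  have hnonneg := weightComp_nonneg h₁ h₂ hμ₂
  refine ⟨weightComp Δ₁ Δ₂ μ₂,
    fun s u => ⟨hnonneg s u, le_one_of_sum_sum_eq_one hnonneg ?_ s u⟩, fun s u h => ?_, hrow, hcol⟩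
  · simpa only [← hrow] using h₁1
  · obtain ⟨t, hst, htu⟩ := exists_pos_of_weightComp_pos h₁ h₂ h
    exact ⟨t, hR₁ s t hst, hR₂ t u htu⟩

/-- weight-function lifting is transitive along relational composition. -/
theorem lift_trans (μ₁ μ₂ μ₃ : S → ℝ)
    (h₁0 : ∀ s, 0 ≤ μ₁ s) (h₁1 : ∑ s, μ₁ s = 1)
    (h₂0 : ∀ s, 0 ≤ μ₂ s) (h₂1 : ∑ s, μ₂ s = 1)
    (h₃0 : ∀ s, 0 ≤ μ₃ s) (h₃1 : ∑ s, μ₃ s = 1)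
    (R₁ R₂ : Set (S × S))
    (h12 : Lift R₁ μ₁ μ₂) (h23 : Lift R₂ μ₂ μ₃) :
    Lift {p : S × S | ∃ t, (p.1, t) ∈ R₁ ∧ (t, p.2) ∈ R₂} μ₁ μ₃ :=
  lift_trans_general μ₁ μ₂ μ₃ h₁1 R₁ R₂ h12 h23
end

section
/- Let S be a finite set, R ⊆ S × S, and μ, μ' stochastic distributions on S. Then μ ⊑_R μ' if and only if the maximum flow in the bipartite network N(μ, μ', R) has value 1, where N(μ,μ',R) has source 𝓈, sink 𝓉, vertices for each element of support(μ) and a disjoint copy of support(μ'), edges 𝓈→s with capacity μ(s), edges t̄→𝓉 with capacity μ'(t), and edges s→t̄ with infinite capacity whenever (s,t) ∈ R. -/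
open Finset
open scoped Classical ENNReal

/-- Vertices of the bipartite network `N(μ, μ', R)`: a source `src`, a sink
`snk`, left copies `lft s` of states and right copies `rgt t` of states. -/
abbrev Vert (S : Type*) := (Bool × S) ⊕ Bool

variable {S : Type*} [Fintype S]

def src {S : Type*} : Vert S := Sum.inr false
def snk {S : Type*} : Vert S := Sum.inr true
def lft {S : Type*} (s : S) : Vert S := Sum.inl (false, s)
def rgt {S : Type*} (t : S) : Vert S := Sum.inl (true, t)

/-- Capacities of `N(μ, μ', R)`: `μ(s)` on `src → lft s`, `μ'(t)` on
`rgt t → snk`, infinite capacity on `lft s → rgt t` whenever `(s,t) ∈ R`,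
and `0` (no edge) otherwise. -/
noncomputable def cap (μ μ' : S → ℝ) (R : Set (S × S)) : Vert S → Vert S → ℝ≥0∞ :=
  fun v w =>
    match v, w with
    | Sum.inr false, Sum.inl (false, s) => ENNReal.ofReal (μ s)
    | Sum.inl (true, t), Sum.inr true => ENNReal.ofReal (μ' t)
    | Sum.inl (false, s), Sum.inl (true, t) => if (s, t) ∈ R then ⊤ else 0
    | _, _ => 0

/-- `f` is a flow on the network with capacities `c`: capacity constraints,
antisymmetry, and conservation at every internal vertex. -/
def IsFlow (c : Vert S → Vert S → ℝ≥0∞) (f : Vert S → Vert S → ℝ) : Prop :=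
  (∀ v w, ENNReal.ofReal (f v w) ≤ c v w) ∧
  (∀ v w, f v w = - f w v) ∧
  (∀ v : Vert S, v ≠ src → v ≠ snk → (∑ u, f u v) = 0)

/-- The value of a flow: the net outflow of the source. -/
def flowValue (f : Vert S → Vert S → ℝ) : ℝ := ∑ w, f src w

/-! A coupling `Δ` yields a flow that carries `μ s` into each left vertex, `Δ s t` across and
`μ' t` out of each right vertex; its value `∑ μ = 1` is maximal because no flow can exceed the
total source capacity. Conversely, a flow of value `1 = ∑ μ` saturates every source edge, and by
conservation its sink edges carry `1 = ∑ μ'` and are saturated too; conservation at the left and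
right vertices then says that the middle entries `f (lft s) (rgt t)` have marginals `μ` and `μ'`,
and they vanish outside `R` because those edges have capacity `0`. -/

lemma sum_vert (g : Vert S → ℝ) :
    ∑ v, g v = g src + g snk + (∑ s, g (lft s)) + ∑ t, g (rgt t) := by
  rw [Fintype.sum_sum_type, Fintype.sum_prod_type, Fintype.sum_bool, Fintype.sum_bool]
  simp only [src, snk, lft, rgt]
  ring

lemma isFlow_sub_swap {c : Vert S → Vert S → ℝ≥0∞} {p : Vert S → Vert S → ℝ}
    (hp : ∀ v w, 0 ≤ p v w) (hpc : ∀ v w, ENNReal.ofReal (p v w) ≤ c v w)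
    (hkirchhoff : ∀ v, v ≠ src → v ≠ snk → ∑ u, p u v = ∑ u, p v u) :
    IsFlow c fun v w => p v w - p w v := by
  refine ⟨fun v w => le_trans (ENNReal.ofReal_le_ofReal ?_) (hpc v w),
    fun v w => by ring, fun v hsrc hsnk => ?_⟩
  · linarith [hp w v]
  · rw [sum_sub_distrib, hkirchhoff v hsrc hsnk, sub_self]

namespace IsFlow

variable {c : Vert S → Vert S → ℝ≥0∞} {f : Vert S → Vert S → ℝ} {v w : Vert S}

lemma apply_nonpos (hf : IsFlow c f) (h : c v w = 0) : f v w ≤ 0 := by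
  simpa [h] using hf.1 v w

lemma apply_eq_zero (hf : IsFlow c f) (h : c v w = 0) (h' : c w v = 0) : f v w = 0 := by
  linarith [hf.apply_nonpos h, hf.apply_nonpos h', hf.2.1 v w]

lemma apply_le (hf : IsFlow c f) {b : ℝ} (hb : 0 ≤ b) (h : c v w = ENNReal.ofReal b) :
    f v w ≤ b := by
  have := hf.1 v w
  rw [h, ENNReal.ofReal_le_ofReal_iff'] at this
  exact this.elim id fun h0 => h0.trans hb

variable {μ μ' : S → ℝ} {R : Set (S × S)} {s t : S}

attribute [local simp] cap src snk lft rgt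

lemma flowValue_eq_sum_src_lft (hf : IsFlow (cap μ μ' R) f) :
    flowValue f = ∑ s, f src (lft s) := by
  rw [flowValue, sum_vert]
  simp only [hf.apply_eq_zero (v := src) (w := src) (by simp) (by simp),
    hf.apply_eq_zero (v := src) (w := snk) (by simp) (by simp),
    fun t => hf.apply_eq_zero (v := src) (w := rgt t) (by simp) (by simp),
    sum_const_zero, zero_add, add_zero]

lemma apply_src_lft_eq_sum (hf : IsFlow (cap μ μ' R) f) (s : S) :
    f src (lft s) = ∑ t, f (lft s) (rgt t) := by
  have h := hf.2.2 (lft s) (by simp) (by simp)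
  rw [sum_vert] at h
  simp only [hf.apply_eq_zero (v := snk) (w := lft s) (by simp) (by simp),
    fun s' => hf.apply_eq_zero (v := lft s') (w := lft s) (by simp) (by simp),
    fun t => hf.2.1 (rgt t) (lft s), sum_const_zero, sum_neg_distrib] at h
  linarith

lemma sum_eq_apply_rgt_snk (hf : IsFlow (cap μ μ' R) f) (t : S) :
    ∑ s, f (lft s) (rgt t) = f (rgt t) snk := by
  have h := hf.2.2 (rgt t) (by simp) (by simp)
  rw [sum_vert] at h
  simp only [hf.apply_eq_zero (v := src) (w := rgt t) (by simp) (by simp),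
    fun t' => hf.apply_eq_zero (v := rgt t') (w := rgt t) (by simp) (by simp),
    hf.2.1 snk (rgt t), sum_const_zero] at h
  linarith

lemma sum_rgt_snk_eq_flowValue (hf : IsFlow (cap μ μ' R) f) :
    ∑ t, f (rgt t) snk = flowValue f := by
  simp only [hf.flowValue_eq_sum_src_lft, hf.apply_src_lft_eq_sum, ← hf.sum_eq_apply_rgt_snk]
  exact sum_comm

lemma apply_src_lft_le (hf : IsFlow (cap μ μ' R) f) (hμ : 0 ≤ μ s) : f src (lft s) ≤ μ s :=
  hf.apply_le hμ rfl

lemma apply_rgt_snk_le (hf : IsFlow (cap μ μ' R) f) (hμ' : 0 ≤ μ' t) : f (rgt t) snk ≤ μ' t :=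
  hf.apply_le hμ' rfl

lemma apply_lft_rgt_nonneg (hf : IsFlow (cap μ μ' R) f) (s t : S) : 0 ≤ f (lft s) (rgt t) := by
  linarith [hf.apply_nonpos (v := rgt t) (w := lft s) (by simp),
    hf.2.1 (lft s) (rgt t)]

lemma mem_of_apply_lft_rgt_pos (hf : IsFlow (cap μ μ' R) f) (h : 0 < f (lft s) (rgt t)) :
    (s, t) ∈ R := by
  by_contra hR
  exact (hf.apply_nonpos (by simp [hR])).not_gt h

lemma apply_lft_rgt_le (hf : IsFlow (cap μ μ' R) f) (s t : S) :
    f (lft s) (rgt t) ≤ f src (lft s) :=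
  hf.apply_src_lft_eq_sum s ▸
    single_le_sum (fun t' _ => hf.apply_lft_rgt_nonneg s t') (mem_univ t)

lemma flowValue_le_sum (hf : IsFlow (cap μ μ' R) f) (hμ : ∀ s, 0 ≤ μ s) :
    flowValue f ≤ ∑ s, μ s := by
  rw [hf.flowValue_eq_sum_src_lft]
  exact sum_le_sum fun s _ => hf.apply_src_lft_le (hμ s)

lemma apply_src_lft_eq_of_flowValue_eq (hf : IsFlow (cap μ μ' R) f) (hμ : ∀ s, 0 ≤ μ s)
    (hval : flowValue f = ∑ s, μ s) (s : S) : f src (lft s) = μ s :=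
  (sum_eq_sum_iff_of_le fun s _ => hf.apply_src_lft_le (hμ s)).1
    (hf.flowValue_eq_sum_src_lft ▸ hval) s (mem_univ s)

lemma apply_rgt_snk_eq_of_flowValue_eq (hf : IsFlow (cap μ μ' R) f) (hμ' : ∀ t, 0 ≤ μ' t)
    (hval : flowValue f = ∑ t, μ' t) (t : S) : f (rgt t) snk = μ' t :=
  (sum_eq_sum_iff_of_le fun t _ => hf.apply_rgt_snk_le (hμ' t)).1
    (hf.sum_rgt_snk_eq_flowValue ▸ hval) t (mem_univ t)

end IsFlow

def couplingLoad {S : Type*} (μ μ' : S → ℝ) (Δ : S → S → ℝ) : Vert S → Vert S → ℝ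
  | Sum.inr false, Sum.inl (false, s) => μ s
  | Sum.inl (false, s), Sum.inl (true, t) => Δ s t
  | Sum.inl (true, t), Sum.inr true => μ' t
  | _, _ => 0

lemma ofReal_couplingLoad_le_cap {S : Type*} {μ μ' : S → ℝ} {R : Set (S × S)} {Δ : S → S → ℝ}
    (hΔR : ∀ s t, 0 < Δ s t → (s, t) ∈ R) (v w : Vert S) :
    ENNReal.ofReal (couplingLoad μ μ' Δ v w) ≤ cap μ μ' R v w := by
  rcases v with ⟨_ | _, s⟩ | _ | _ <;> rcases w with ⟨_ | _, t⟩ | _ | _ <;>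
    simp only [couplingLoad, cap, ENNReal.ofReal_zero, le_refl]
  by_cases h : (s, t) ∈ R
  · simp [h]
  · simpa [h] using fun hpos => h (hΔR s t hpos)

def couplingFlow {S : Type*} (μ μ' : S → ℝ) (Δ : S → S → ℝ) (v w : Vert S) : ℝ :=
  couplingLoad μ μ' Δ v w - couplingLoad μ μ' Δ w v

section Coupling

variable {μ μ' : S → ℝ} {R : Set (S × S)} {Δ : S → S → ℝ}

lemma sum_couplingLoad_in_eq_out (hrow : ∀ s, μ s = ∑ t, Δ s t)
    (hcol : ∀ t, μ' t = ∑ s, Δ s t) (v : Vert S) (hsrc : v ≠ src) (hsnk : v ≠ snk) :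
    ∑ u, couplingLoad μ μ' Δ u v = ∑ u, couplingLoad μ μ' Δ v u := by
  rw [sum_vert, sum_vert]
  rcases v with ⟨_ | _, x⟩ | _ | _
  · simp [couplingLoad, src, snk, lft, rgt, hrow]
  · simp [couplingLoad, src, snk, lft, rgt, hcol]
  · exact absurd rfl hsrc
  · exact absurd rfl hsnk

lemma isFlow_couplingFlow (hμ : ∀ s, 0 ≤ μ s) (hμ' : ∀ t, 0 ≤ μ' t) (hΔ : ∀ s t, 0 ≤ Δ s t)
    (hΔR : ∀ s t, 0 < Δ s t → (s, t) ∈ R)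
    (hrow : ∀ s, μ s = ∑ t, Δ s t) (hcol : ∀ t, μ' t = ∑ s, Δ s t) :
    IsFlow (cap μ μ' R) (couplingFlow μ μ' Δ) := by
  refine isFlow_sub_swap (fun v w => ?_) (ofReal_couplingLoad_le_cap hΔR)
    (sum_couplingLoad_in_eq_out hrow hcol)
  rcases v with ⟨_ | _, s⟩ | _ | _ <;> rcases w with ⟨_ | _, t⟩ | _ | _ <;>
    simp [couplingLoad, hμ, hμ', hΔ]

lemma flowValue_couplingFlow :
    flowValue (couplingFlow μ μ' Δ) = ∑ s, μ s := by
  rw [flowValue, sum_vert]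
  simp [couplingFlow, couplingLoad, src, snk, lft, rgt]

end Coupling

/-- `μ ⊑_R μ'` holds iff the maximum flow of the network
`N(μ, μ', R)` has value `1`. -/
theorem lift_iff_maxflow_one (μ μ' : S → ℝ) (R : Set (S × S))
    (hμ0 : ∀ s, 0 ≤ μ s) (hμ1 : ∑ s, μ s = 1)
    (hμ'0 : ∀ s, 0 ≤ μ' s) (hμ'1 : ∑ s, μ' s = 1) :
    (∃ Δ : S → S → ℝ,
      (∀ s t, 0 ≤ Δ s t ∧ Δ s t ≤ 1) ∧
      (∀ s t, 0 < Δ s t → (s, t) ∈ R) ∧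
      (∀ s, μ s = ∑ t, Δ s t) ∧
      (∀ t, μ' t = ∑ s, Δ s t)) ↔
    (∃ f, IsFlow (cap μ μ' R) f ∧
      (∀ g, IsFlow (cap μ μ' R) g → flowValue g ≤ flowValue f) ∧
      flowValue f = 1) := by
  constructor
  · rintro ⟨Δ, hΔ, hΔR, hrow, hcol⟩
    refine ⟨couplingFlow μ μ' Δ,
      isFlow_couplingFlow hμ0 hμ'0 (fun s t => (hΔ s t).1) hΔR hrow hcol,
      fun g hg => (hg.flowValue_le_sum hμ0).trans_eq flowValue_couplingFlow.symm,
      flowValue_couplingFlow.trans hμ1⟩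
  · rintro ⟨f, hf, -, hval⟩
    have hsrc := hf.apply_src_lft_eq_of_flowValue_eq hμ0 (hval.trans hμ1.symm)
    have hsnk := hf.apply_rgt_snk_eq_of_flowValue_eq hμ'0 (hval.trans hμ'1.symm)
    refine ⟨fun s t => f (lft s) (rgt t), fun s t => ⟨hf.apply_lft_rgt_nonneg s t, ?_⟩,
      fun s t => hf.mem_of_apply_lft_rgt_pos, fun s => hsrc s ▸ hf.apply_src_lft_eq_sum s,
      fun t => hsnk t ▸ (hf.sum_eq_apply_rgt_snk t).symm⟩
    calc f (lft s) (rgt t) ≤ μ s := hsrc s ▸ hf.apply_lft_rgt_le s t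
      _ ≤ ∑ s', μ s' := single_le_sum (fun s' _ => hμ0 s') (mem_univ s)
      _ = 1 := hμ1
end

section
/- Let D be a DTMC, R ⊆ S×S, (s1,s2) ∈ R, and suppose there is s1' ∈ post(s1) with (s1',s2)∉R and s2' ∈ post(s2) with (s1,s2')∉R. Let A1,…,A_h be the equivalence classes of the equivalence relation generated by H = R ∩ [(post(s1)∪{s1}) × (post(s2)∪{s2})], with s1, s2 ∈ A_h. If s1 ≾_R s2 with witnessing data (δ1,δ2,Δ,K1,K2), then for all i < h: (1) P(s1,Aᵢ) > 0 and P(s2,Aᵢ) > 0, and (2) P(s1,Aᵢ)/P(s2,Aᵢ) = K1/K2. -/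
/-!
On a class `A` avoiding `s₁` (hence also `s₂`, which is `H`-related to `s₁`), every successor `w`
of `sᵢ` in `A` has `δᵢ(w) = 1`: otherwise the condition on `Vᵢ` would `H`-relate `w` to `s₂`
resp. `s₁`. Hence `P(sᵢ, A) = Σ_{w ∈ A} δᵢ(w) P(sᵢ, w)`, which the coupling `Δ` rewrites as
`K₁ · Σ_{u ∈ A} Δ(u, S)` resp. `K₂ · Σ_{v ∈ A} Δ(S, v)`. The support of `Δ` lies in `H`, so `Δ`
never links `A` with its complement and both double sums are the same mass `T`; it is positive
because `A` contains a successor of `s₁` or of `s₂`.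
-/

open Finset
open scoped Classical

variable {S : Type*} [Fintype S] {AP : Type*}

theorem Relation.EqvGen.iff_of_rel {α : Type*} {r : α → α → Prop} {a x y : α} (h : r x y) :
    Relation.EqvGen r a x ↔ Relation.EqvGen r a y :=
  ⟨fun hx => hx.trans _ _ _ (.rel _ _ h),
    fun hy => hy.trans _ _ _ ((Relation.EqvGen.rel _ _ h).symm _ _)⟩

theorem weight_eq_one_of_not {α : Type*} {p δ : α → ℝ} {Q : α → Prop} (hδ : ∀ u, δ u ≤ 1)
    (hV : ∀ v, 0 < p v → δ v < 1 → Q v) {v : α} (hv : 0 < p v) (hQ : ¬ Q v) : δ v = 1 :=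
  le_antisymm (hδ v) (not_lt.1 fun h => hQ (hV v hv h))

theorem sum_weight_mul_pos {p δ : S → ℝ} {Q : S → Prop} (hp : ∀ u, 0 ≤ p u)
    (hδ : ∀ u, 0 ≤ δ u ∧ δ u ≤ 1) (hV : ∀ v, 0 < p v → δ v < 1 → Q v)
    (hvis : ∃ u, 0 < p u ∧ ¬ Q u) : 0 < ∑ u, δ u * p u := by
  obtain ⟨u, hu, hQ⟩ := hvis
  refine sum_pos' (fun i _ => mul_nonneg (hδ i).1 (hp i)) ⟨u, mem_univ u, ?_⟩
  rwa [weight_eq_one_of_not (fun u => (hδ u).2) hV hu hQ, one_mul]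

theorem sum_filter_pos_of_mem {p : S → ℝ} {A : Set S} {a : S} (hp : ∀ u, 0 ≤ p u) (haA : a ∈ A)
    (ha : 0 < p a) : 0 < ∑ u ∈ univ.filter (· ∈ A), p u :=
  sum_pos' (fun u _ => hp u) ⟨a, mem_filter.2 ⟨mem_univ a, haA⟩, ha⟩

theorem sum_filter_eq_mul_sum_of_weight_eq_one {p δ ρ : S → ℝ} {K : ℝ} {A : Set S}
    (hp : ∀ u, 0 ≤ p u) (hδA : ∀ w ∈ A, 0 < p w → δ w = 1) (hρ : ∀ w, K * ρ w = p w * δ w) :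
    ∑ w ∈ univ.filter (· ∈ A), p w = K * ∑ w ∈ univ.filter (· ∈ A), ρ w := by
  rw [mul_sum]
  refine sum_congr rfl fun w hw => ?_
  rw [hρ]
  rcases (hp w).eq_or_lt with h | h
  · rw [← h, zero_mul]
  · rw [hδA w (mem_filter.1 hw).2 h, mul_one]

theorem sum_filter_sum_comm_of_closed (Δ : S → S → ℝ) (A : Set S)
    (hA : ∀ u v, Δ u v ≠ 0 → (u ∈ A ↔ v ∈ A)) :
    ∑ u ∈ univ.filter (· ∈ A), ∑ v, Δ u v = ∑ v ∈ univ.filter (· ∈ A), ∑ u, Δ u v := by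
  have hsupp : ∀ u v, (if u ∈ A then Δ u v else 0) = if v ∈ A then Δ u v else 0 := fun u v => by
    by_cases h : Δ u v = 0
    · simp [h]
    · simp [hA u v h]
  simp only [sum_filter, ite_sum_zero]
  rw [sum_comm]
  exact sum_congr rfl fun v _ => sum_congr rfl fun u _ => hsupp u v

theorem class_ratio_general (P : S → S → ℝ)
    (hP0 : ∀ s u, 0 ≤ P s u)
    (R : Set (S × S)) (s₁ s₂ : S) (hR : (s₁, s₂) ∈ R)
    (hvis₁ : ∃ u, 0 < P s₁ u ∧ (u, s₂) ∉ R)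
    (hvis₂ : ∃ u, 0 < P s₂ u ∧ (s₁, u) ∉ R)
    -- witnessing data for `s₁ ≾_R s₂`
    (δ₁ δ₂ : S → ℝ) (Δ : S → S → ℝ)
    (hδ₁ : ∀ u, 0 ≤ δ₁ u ∧ δ₁ u ≤ 1) (hδ₂ : ∀ u, 0 ≤ δ₂ u ∧ δ₂ u ≤ 1)
    (hV₁ : ∀ v, 0 < P s₁ v → δ₁ v < 1 → (v, s₂) ∈ R)
    (hV₂ : ∀ v, 0 < P s₂ v → δ₂ v < 1 → (s₁, v) ∈ R)
    (hΔ01 : ∀ u v, 0 ≤ Δ u v ∧ Δ u v ≤ 1)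
    (hΔpos : ∀ u v, 0 < Δ u v →
      (0 < P s₁ u ∧ 0 < δ₁ u) ∧ (0 < P s₂ v ∧ 0 < δ₂ v) ∧ (u, v) ∈ R)
    (hΔw : 0 < (∑ u, δ₁ u * P s₁ u) → 0 < (∑ u, δ₂ u * P s₂ u) →
      ∀ w, (∑ u, δ₁ u * P s₁ u) * (∑ v, Δ w v) = P s₁ w * δ₁ w ∧
           (∑ u, δ₂ u * P s₂ u) * (∑ v, Δ v w) = P s₂ w * δ₂ w)
    -- the classes of the equivalence relation generated by `H`
    (A : Set S)
    (hA : ∃ a, (0 < P s₁ a ∨ 0 < P s₂ a ∨ a = s₁ ∨ a = s₂) ∧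
      A = {b | Relation.EqvGen
        (fun x y => (x, y) ∈ R ∧ (0 < P s₁ x ∨ x = s₁) ∧ (0 < P s₂ y ∨ y = s₂))
        a b})
    (hAs₁ : s₁ ∉ A) :
    (0 < ∑ u ∈ Finset.univ.filter (· ∈ A), P s₁ u) ∧
    (0 < ∑ u ∈ Finset.univ.filter (· ∈ A), P s₂ u) ∧
    (∑ u ∈ Finset.univ.filter (· ∈ A), P s₁ u) /
        (∑ u ∈ Finset.univ.filter (· ∈ A), P s₂ u) =
      (∑ u, δ₁ u * P s₁ u) / (∑ u, δ₂ u * P s₂ u) := by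
  obtain ⟨a, ha, hAa⟩ := hA
  have hclass : ∀ x y, (x, y) ∈ R → (0 < P s₁ x ∨ x = s₁) → (0 < P s₂ y ∨ y = s₂) →
      (x ∈ A ↔ y ∈ A) := fun x y hxy hx hy => by
    subst hAa; exact Relation.EqvGen.iff_of_rel ⟨hxy, hx, hy⟩
  have hK₁ := sum_weight_mul_pos (hP0 s₁) hδ₁ hV₁ hvis₁
  have hK₂ := sum_weight_mul_pos (hP0 s₂) hδ₂ hV₂ hvis₂
  have hs₂ : s₂ ∉ A := fun h => hAs₁ ((hclass _ _ hR (.inr rfl) (.inr rfl)).2 h)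
  have hδ₁A : ∀ w ∈ A, 0 < P s₁ w → δ₁ w = 1 := fun w hw hp => weight_eq_one_of_not
    (fun u => (hδ₁ u).2) hV₁ hp fun h => hs₂ ((hclass _ _ h (.inl hp) (.inr rfl)).1 hw)
  have hδ₂A : ∀ w ∈ A, 0 < P s₂ w → δ₂ w = 1 := fun w hw hp => weight_eq_one_of_not
    (fun u => (hδ₂ u).2) hV₂ hp fun h => hAs₁ ((hclass _ _ h (.inr rfl) (.inl hp)).2 hw)
  have hclosed : ∀ u v, Δ u v ≠ 0 → (u ∈ A ↔ v ∈ A) := fun u v h => by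
    obtain ⟨⟨hu, -⟩, ⟨hv, -⟩, huv⟩ := hΔpos u v ((hΔ01 u v).1.lt_of_ne' h)
    exact hclass u v huv (.inl hu) (.inl hv)
  have h₁ := sum_filter_eq_mul_sum_of_weight_eq_one (hP0 s₁) hδ₁A fun w => (hΔw hK₁ hK₂ w).1
  have h₂ := sum_filter_eq_mul_sum_of_weight_eq_one (hP0 s₂) hδ₂A fun w => (hΔw hK₁ hK₂ w).2
  rw [← sum_filter_sum_comm_of_closed Δ A hclosed] at h₂
  have haA : a ∈ A := hAa ▸ Relation.EqvGen.refl a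
  have hT : 0 < ∑ u ∈ univ.filter (· ∈ A), ∑ v, Δ u v := by
    rcases ha with ha | ha | rfl | rfl
    · exact pos_of_mul_pos_right (h₁ ▸ sum_filter_pos_of_mem (hP0 s₁) haA ha) hK₁.le
    · exact pos_of_mul_pos_right (h₂ ▸ sum_filter_pos_of_mem (hP0 s₂) haA ha) hK₂.le
    · exact absurd haA hAs₁
    · exact absurd haA hs₂
  refine ⟨h₁ ▸ mul_pos hK₁ hT, h₂ ▸ mul_pos hK₂ hT, ?_⟩
  rw [h₁, h₂, mul_div_mul_right _ _ hT.ne']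

/-- Let `A₁, …, A_h` be the classes of the equivalence relation
generated by `H = R ∩ [(post(s₁) ∪ {s₁}) × (post(s₂) ∪ {s₂})]`, with
`s₁, s₂ ∈ A_h`.  If `s₂` weakly simulates `s₁` up to `R` with witnessing data
`(δ₁, δ₂, Δ, K₁, K₂)` and both states have a visible step, then every class `A`
other than the one containing `s₁` satisfies `P(s₁,A) > 0`, `P(s₂,A) > 0` and
`P(s₁,A)/P(s₂,A) = K₁/K₂`. -/
theorem class_ratio (P : S → S → ℝ) (L : S → Set AP)
    (hP0 : ∀ s u, 0 ≤ P s u)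
    (hrows : ∀ s, (∑ u, P s u) = 0 ∨ (∑ u, P s u) = 1)
    (R : Set (S × S)) (s₁ s₂ : S) (hR : (s₁, s₂) ∈ R) (hL : L s₁ = L s₂)
    (hvis₁ : ∃ u, 0 < P s₁ u ∧ (u, s₂) ∉ R)
    (hvis₂ : ∃ u, 0 < P s₂ u ∧ (s₁, u) ∉ R)
    -- witnessing data for `s₁ ≾_R s₂`
    (δ₁ δ₂ : S → ℝ) (Δ : S → S → ℝ)
    (hδ₁ : ∀ u, 0 ≤ δ₁ u ∧ δ₁ u ≤ 1) (hδ₂ : ∀ u, 0 ≤ δ₂ u ∧ δ₂ u ≤ 1)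
    (hV₁ : ∀ v, 0 < P s₁ v → δ₁ v < 1 → (v, s₂) ∈ R)
    (hV₂ : ∀ v, 0 < P s₂ v → δ₂ v < 1 → (s₁, v) ∈ R)
    (hΔ01 : ∀ u v, 0 ≤ Δ u v ∧ Δ u v ≤ 1)
    (hΔpos : ∀ u v, 0 < Δ u v →
      (0 < P s₁ u ∧ 0 < δ₁ u) ∧ (0 < P s₂ v ∧ 0 < δ₂ v) ∧ (u, v) ∈ R)
    (hΔw : 0 < (∑ u, δ₁ u * P s₁ u) → 0 < (∑ u, δ₂ u * P s₂ u) →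
      ∀ w, (∑ u, δ₁ u * P s₁ u) * (∑ v, Δ w v) = P s₁ w * δ₁ w ∧
           (∑ u, δ₂ u * P s₂ u) * (∑ v, Δ v w) = P s₂ w * δ₂ w)
    -- the classes of the equivalence relation generated by `H`
    (A : Set S)
    (hA : ∃ a, (0 < P s₁ a ∨ 0 < P s₂ a ∨ a = s₁ ∨ a = s₂) ∧
      A = {b | Relation.EqvGen
        (fun x y => (x, y) ∈ R ∧ (0 < P s₁ x ∨ x = s₁) ∧ (0 < P s₂ y ∨ y = s₂))
        a b})
    (hAs₁ : s₁ ∉ A) :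
    (0 < ∑ u ∈ Finset.univ.filter (· ∈ A), P s₁ u) ∧
    (0 < ∑ u ∈ Finset.univ.filter (· ∈ A), P s₂ u) ∧
    (∑ u ∈ Finset.univ.filter (· ∈ A), P s₁ u) /
        (∑ u ∈ Finset.univ.filter (· ∈ A), P s₂ u) =
      (∑ u, δ₁ u * P s₁ u) / (∑ u, δ₂ u * P s₂ u) :=
  class_ratio_general P hP0 R s₁ s₂ hR hvis₁ hvis₂ δ₁ δ₂ Δ hδ₁ hδ₂ hV₁ hV₂ hΔ01 hΔpos hΔw A hA hAs₁
end
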